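/- arXiv:2510.21589 — 10 statements merged into one kernel-verified Lean document; each statement's English description precedes it below -/
import Mathlib

section
/- If f: {0,1}^n → {0,1} is unate with f^{-1}(1) nonempty, then for every coordinate i ∈ [n] with d^f_i ≠ *, the set Edge_i^{1−d^f_i}(f) is empty; i.e., a unate function has no strictly (1−d^f_i)-monotone edge in any direction i where its bias vector is fixed. -/
open Finset

/-- The set of satisfying assignments of a Boolean function on `{0,1}^n`. -/
def satSet (n : ℕ) (f : (Fin n → Bool) → Bool) : Finset (Fin n → Bool) :=
  Finset.univ.filter (fun x => f x = true)

/-- Relative distance `|f⁻¹(1) Δ g⁻¹(1)| / |f⁻¹(1)|`. -/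
noncomputable def reldist (n : ℕ) (f g : (Fin n → Bool) → Bool) : ℝ :=
  ((symmDiff (satSet n f) (satSet n g)).card : ℝ) / ((satSet n f).card : ℝ)

/-- A Boolean function is unate if in each coordinate it is either monotone
non-decreasing or monotone non-increasing. -/
def Unate (n : ℕ) (f : (Fin n → Bool) → Bool) : Prop :=
  ∀ i : Fin n,
    (∀ x, f (Function.update x i false) = true → f (Function.update x i true) = true) ∨
    (∀ x, f (Function.update x i true) = true → f (Function.update x i false) = true)

/-- The set of edges in direction `i` that are strictly `b`-monotone in `f`,
each edge `{x^{i←0}, x^{i←1}}` being represented by its lower endpoint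
(the point whose `i`-th bit is `false`). -/
def edgeSet (n : ℕ) (f : (Fin n → Bool) → Bool) (i : Fin n) (b : Bool) :
    Finset (Fin n → Bool) :=
  Finset.univ.filter (fun x =>
    x i = false ∧ f x = !b ∧ f (Function.update x i true) = b)

/-- `Pr_{z ~ f⁻¹(1)}[z_i = b]`. -/
noncomputable def prCoord (n : ℕ) (f : (Fin n → Bool) → Bool) (i : Fin n) (b : Bool) : ℝ :=
  (((satSet n f).filter (fun z => z i = b)).card : ℝ) / ((satSet n f).card : ℝ)

/-- The bias vector `d^f ∈ {0,1,*}^n` of `f`, encoded with `Option Bool`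
(`some b` for a fixed bit `b`, `none` for `*`). -/
noncomputable def biasVec (n : ℕ) (f : (Fin n → Bool) → Bool) (i : Fin n) : Option Bool :=
  if 0.6 < prCoord n f i true then some true
  else if 0.6 < prCoord n f i false then some false
  else none

/-- `x` with its `i`-th bit flipped. -/
def flipBit (n : ℕ) (x : Fin n → Bool) (i : Fin n) : Fin n → Bool :=
  Function.update x i (!(x i))

/-- The `(r,a)`-truncation of `f`. -/
noncomputable def trunc (n : ℕ) (f : (Fin n → Bool) → Bool) (r : ℝ) (a : Fin n → Bool) :
    (Fin n → Bool) → Bool :=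
  fun x => if (hammingDist x a : ℝ) ≤ r then f x else false

/-- Distance `Δ(x, d)` from a point to a partial string `d ∈ {0,1,*}^n`:
the number of fixed coordinates of `d` on which `x` disagrees with `d`. -/
def distPartial (n : ℕ) (x : Fin n → Bool) (d : Fin n → Option Bool) : ℕ :=
  (Finset.univ.filter (fun i => ∃ b, d i = some b ∧ x i ≠ b)).card

/-- The `(M, d̃)`-truncation of `f` for a partial string `d̃`. -/
noncomputable def truncP (n : ℕ) (f : (Fin n → Bool) → Bool) (M : ℝ)
    (d : Fin n → Option Bool) : (Fin n → Bool) → Bool :=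
  fun x => if (distPartial n x d : ℝ) ≤ M then f x else false

/-! An edge in direction `i` that is strictly `(1 - b)`-monotone rules out one of the two
orientations of the unate function `f` in coordinate `i`, so `f` stays true when bit `i` is moved
from `b` to `1 - b`. This move injects the satisfying assignments with `z_i = b` into those with
`z_i = 1 - b`, hence `Pr[z_i = b] ≤ 1/2`, contradicting `Pr[z_i = b] > 0.6`. -/

-- Only `≤ 1`: for an empty `f⁻¹(1)` both terms are `0 / 0 = 0`.
theorem prCoord_add_prCoord_not_le_one (n : ℕ) (f : (Fin n → Bool) → Bool) (i : Fin n)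
    (c : Bool) : prCoord n f i c + prCoord n f i (!c) ≤ 1 := by
  have hsplit : ((satSet n f).filter (fun z => z i = c)).card +
      ((satSet n f).filter (fun z => z i = !c)).card = (satSet n f).card := by
    simp_rw [Bool.eq_not_iff]
    exact card_filter_add_card_filter_not _
  unfold prCoord
  rw [← add_div, ← Nat.cast_add, hsplit]
  exact div_self_le_one _

variable {n : ℕ} {f : (Fin n → Bool) → Bool} {i : Fin n}

theorem lt_prCoord_of_biasVec_eq_some {b : Bool} (hb : biasVec n f i = some b) :
    0.6 < prCoord n f i b := by
  unfold biasVec at hb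
  split_ifs at hb with htrue hfalse <;> cases hb <;> assumption

theorem prCoord_le_prCoord_not {c : Bool}
    (hmono : ∀ z, f (Function.update z i c) = true → f (Function.update z i (!c)) = true) :
    prCoord n f i c ≤ prCoord n f i (!c) := by
  unfold prCoord
  refine div_le_div_of_nonneg_right (Nat.cast_le.mpr ?_) (Nat.cast_nonneg _)
  refine card_le_card_of_injOn (fun z : Fin n → Bool => Function.update z i (!c)) ?_ ?_
  · intro z hz
    simp only [coe_filter, satSet, mem_filter, mem_univ, true_and] at hz ⊢
    obtain ⟨hfz, hzi⟩ := hz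
    refine ⟨hmono z ?_, by simp⟩
    rwa [← hzi, Function.update_eq_self]
  · intro z hz w hw hzw
    simp only [coe_filter, satSet, mem_filter, mem_univ, true_and] at hz hw
    have hrestore : ∀ y : Fin n → Bool, y i = c →
        Function.update (Function.update y i (!c)) i c = y := fun y hy => by
      rw [Function.update_idem, ← hy, Function.update_eq_self]
    rw [← hrestore z hz.2, ← hrestore w hw.2]
    exact congrArg (Function.update · i c) hzw

theorem apply_update_of_mem_edgeSet_not {b : Bool} {x : Fin n → Bool}
    (hx : x ∈ edgeSet n f i (!b)) :
    f (Function.update x i (!b)) = true ∧ f (Function.update x i b) = false := by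
  simp only [edgeSet, mem_filter, mem_univ, true_and, Bool.not_not] at hx
  obtain ⟨hxi, hfx, hfx'⟩ := hx
  have hx_low : Function.update x i false = x := by rw [← hxi, Function.update_eq_self]
  cases b <;> simp [hx_low, hfx, hfx']

theorem Unate.forall_update_of_update_not {c : Bool} (hU : Unate n f)
    {x : Fin n → Bool} (hx1 : f (Function.update x i (!c)) = true)
    (hx0 : f (Function.update x i c) = false) :
    ∀ z, f (Function.update z i c) = true → f (Function.update z i (!c)) = true := by
  rcases hU i with hup | hdown <;> cases c <;> simp_all

theorem unate_edgeSet_opposite_bias_empty_general (n : ℕ) (f : (Fin n → Bool) → Bool)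
    (hU : Unate n f)
    (i : Fin n) (b : Bool) (hb : biasVec n f i = some b) :
    edgeSet n f i (!b) = ∅ := by
  refine eq_empty_of_forall_notMem fun x hx => ?_
  obtain ⟨hx1, hx0⟩ := apply_update_of_mem_edgeSet_not hx
  have hle := prCoord_le_prCoord_not (hU.forall_update_of_update_not hx1 hx0)
  have hbias := lt_prCoord_of_biasVec_eq_some hb
  have hsum := prCoord_add_prCoord_not_le_one n f i b
  linarith

/-- A unate function has no strictly `(1 - d^f_i)`-monotone edge in any
direction `i` where its bias vector is fixed. -/
theorem unate_edgeSet_opposite_bias_empty (n : ℕ) (f : (Fin n → Bool) → Bool)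
    (hU : Unate n f) (hf : (satSet n f).Nonempty)
    (i : Fin n) (b : Bool) (hb : biasVec n f i = some b) :
    edgeSet n f i (!b) = ∅ :=
  unate_edgeSet_opposite_bias_empty_general n f hU i b hb
end

section
/- Let f: {0,1}^n → {0,1} have f^{-1}(1) nonempty with N := |f^{-1}(1)|, and suppose f is ε-far from unate in relative distance, i.e., reldist(f,g) ≥ ε for every unate g: {0,1}^n → {0,1}. Then for every vector d ∈ {0,1}^n, the sum over i ∈ [n] of |Edge_i^{1−d_i}(f)| is at least εN/8. -/
open Finset

/-! Sort `f` successively along every coordinate `i`, pushing its ones towards `x i = d i`: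
on each line in direction `i` the values are replaced by their `and` (on the side `x i ≠ d i`)
and their `or` (on the side `x i = d i`). Sorting along `i` makes `f` monotone towards `d i` in
direction `i`, keeps the monotonicity already obtained in other directions, changes `f` only at
the endpoints of the edges in direction `i` violating it, and does not increase the number of
violating edges in any other direction (a check on each two-dimensional face). The result is a
unate function at distance at most `2 ∑ i, |Edge_i^{1-d_i}(f)|` from `f`, so
`ε N ≤ 2 ∑ i, |Edge_i^{1-d_i}(f)|`. -/

namespace FarUnate

open Function

section Sorting

variable {ι : Type*} [DecidableEq ι]

def MonotoneToward (f : (ι → Bool) → Bool) (i : ι) (c : Bool) : Prop :=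
  ∀ x, f (update x i (!c)) = true → f (update x i c) = true

/-- The values `u false, u true` of a Boolean function on a line, sorted so that the larger
value sits at `c`. -/
def sortLine (c : Bool) (u : Bool → Bool) (t : Bool) : Bool :=
  if t = c then u false || u true else u false && u true

def sortDir (f : (ι → Bool) → Bool) (i : ι) (c : Bool) : (ι → Bool) → Bool :=
  fun x => sortLine c (fun t => f (update x i t)) (x i)

lemma sortDir_update (f : (ι → Bool) → Bool) (i : ι) (c : Bool) (x : ι → Bool) (t : Bool) :
    sortDir f i c (update x i t) = sortLine c (fun s => f (update x i s)) t := by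
  simp [sortDir]

lemma monotoneToward_sortDir_self (f : (ι → Bool) → Bool) (i : ι) (c : Bool) :
    MonotoneToward (sortDir f i c) i c := by
  intro x hx
  rw [sortDir_update] at hx ⊢
  cases c <;> simp_all [sortLine]

lemma MonotoneToward.sortDir {f : (ι → Bool) → Bool} {j : ι} {c' : Bool}
    (h : MonotoneToward f j c') {i : ι} (hij : j ≠ i) (c : Bool) :
    MonotoneToward (sortDir f i c) j c' := by
  intro x hx
  simp only [FarUnate.sortDir, update_of_ne hij.symm, sortLine,
    update_comm (β := fun _ => Bool) hij (!c'), update_comm (β := fun _ => Bool) hij c'] at hx ⊢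
  split_ifs at hx ⊢ <;> simp only [Bool.or_eq_true, Bool.and_eq_true] at hx ⊢
  · exact hx.imp (h _) (h _)
  · exact ⟨h _ hx.1, h _ hx.2⟩

lemma sortDir_ne_iff (f : (ι → Bool) → Bool) (i : ι) (c : Bool) (x : ι → Bool) :
    sortDir f i c x ≠ f x ↔ f (update x i (!c)) = true ∧ f (update x i c) = false := by
  rw [← update_eq_self i x]
  simp only [sortDir_update, update_idem]
  cases c <;> cases x i <;> cases h₀ : f (update x i false) <;>
    cases h₁ : f (update x i true) <;> simp [sortLine, h₀, h₁]

def sortAlong (d : ι → Bool) (L : List ι) (f : (ι → Bool) → Bool) : (ι → Bool) → Bool :=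
  L.foldl (fun g i => sortDir g i (d i)) f

lemma MonotoneToward.sortAlong {f : (ι → Bool) → Bool} {i : ι} {c : Bool}
    (h : MonotoneToward f i c) (d : ι → Bool) {L : List ι} (hi : i ∉ L) :
    MonotoneToward (sortAlong d L f) i c := by
  induction L generalizing f with
  | nil => exact h
  | cons j L ih =>
    rw [List.mem_cons, not_or] at hi
    exact ih (h.sortDir hi.1 _) hi.2

lemma monotoneToward_sortAlong (f : (ι → Bool) → Bool) (d : ι → Bool) {L : List ι}
    (hL : L.Nodup) {i : ι} (hi : i ∈ L) : MonotoneToward (sortAlong d L f) i (d i) := by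
  induction L generalizing f with
  | nil => cases hi
  | cons j L ih =>
    rw [List.nodup_cons] at hL
    rcases List.mem_cons.mp hi with rfl | hi
    · exact (monotoneToward_sortDir_self f i (d i)).sortAlong d hL.1
    · exact ih _ hL.2 hi

end Sorting

lemma sum_eq_sum_sum_update {ι α M : Type*} [Fintype ι] [DecidableEq ι] [Fintype α]
    [DecidableEq α] [AddCommMonoid M] (i : ι) (a : α) (φ : (ι → α) → M) :
    ∑ x, φ x = ∑ y : {y : ι → α // y i = a}, ∑ t, φ (update y.1 i t) := by
  rw [← Fintype.sum_prod_type']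
  refine (Fintype.sum_bijective (fun p : {y : ι → α // y i = a} × α => update p.1.1 i p.2)
    ⟨?_, ?_⟩ _ _ fun _ => rfl).symm
  · rintro ⟨⟨y, hy⟩, t⟩ ⟨⟨z, hz⟩, s⟩ h
    have hts : t = s := by simpa using congrFun h i
    subst hts
    refine Prod.ext (Subtype.ext (funext fun j => ?_)) rfl
    show y j = z j
    by_cases hj : j = i
    · subst hj; rw [hy, hz]
    · simpa [update_of_ne hj] using congrFun h j
  · intro x
    exact ⟨(⟨update x i a, update_self i a x⟩, x i), by simp⟩

lemma card_strict_sortLine_le (c b : Bool) (u v : Bool → Bool) :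
    (∑ t, if sortLine c u t = !b ∧ sortLine c v t = b then 1 else 0 : ℕ) ≤
      ∑ t, if u t = !b ∧ v t = b then 1 else 0 := by
  revert c b u v
  decide

variable {n : ℕ}

lemma card_edgeSet_sortDir_le (f : (Fin n → Bool) → Bool) {i j : Fin n} (hij : j ≠ i)
    (c b : Bool) : (edgeSet n (sortDir f i c) j b).card ≤ (edgeSet n f j b).card := by
  simp only [edgeSet, Finset.card_filter]
  -- group the `j`-edges into the squares they span with direction `i`
  rw [sum_eq_sum_sum_update i false, sum_eq_sum_sum_update i false]
  refine Finset.sum_le_sum fun y _ => ?_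
  simp only [update_of_ne hij, update_comm (β := fun _ => Bool) hij.symm _ true, sortDir_update]
  by_cases hy : y.1 j = false
  · simpa [hy] using card_strict_sortLine_le c b (fun s => f (update y.1 i s))
      (fun s => f (update (update y.1 j true) i s))
  · simp [hy]

lemma symmDiff_satSet (f g : (Fin n → Bool) → Bool) :
    symmDiff (satSet n f) (satSet n g) = univ.filter (fun x => g x ≠ f x) := by
  ext x
  simp only [mem_symmDiff, satSet, mem_filter, mem_univ, true_and]
  cases f x <;> cases g x <;> simp

/-- Sorting changes `f` only at the two endpoints of each edge violating monotonicity
toward `c`. -/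
lemma card_symmDiff_sortDir_le (f : (Fin n → Bool) → Bool) (i : Fin n) (c : Bool) :
    (symmDiff (satSet n f) (satSet n (sortDir f i c))).card ≤
      2 * (edgeSet n f i (!c)).card := by
  set E := edgeSet n f i (!c)
  have hlower : ∀ x, sortDir f i c x ≠ f x → update x i false ∈ E := by
    intro x hx
    rw [sortDir_ne_iff] at hx
    cases c <;> simp_all [E, edgeSet]
  have hsub : univ.filter (fun x => sortDir f i c x ≠ f x) ⊆ E ∪ E.image (update · i true) := by
    intro x hx
    have hx := hlower x (mem_filter.mp hx).2
    cases hxi : x i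
    · exact mem_union_left _ (by rwa [← hxi, update_eq_self] at hx)
    · exact mem_union_right _
        (mem_image.mpr ⟨_, hx, by rw [update_idem, ← hxi, update_eq_self]⟩)
  calc (symmDiff (satSet n f) (satSet n (sortDir f i c))).card
      ≤ (E ∪ E.image (update · i true)).card := by rw [symmDiff_satSet]; exact card_le_card hsub
    _ ≤ E.card + E.card := (card_union_le _ _).trans (Nat.add_le_add_left card_image_le _)
    _ = 2 * E.card := (two_mul _).symm

lemma card_symmDiff_sortAlong_le (f : (Fin n → Bool) → Bool) (d : Fin n → Bool)
    {L : List (Fin n)} (hL : L.Nodup) :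
    (symmDiff (satSet n f) (satSet n (sortAlong d L f))).card ≤
      (L.map fun i => 2 * (edgeSet n f i (!d i)).card).sum := by
  induction L generalizing f with
  | nil => simp [sortAlong]
  | cons j L ih =>
    rw [List.nodup_cons] at hL
    set g := sortDir f j (d j)
    have hedges : (L.map fun i => 2 * (edgeSet n g i (!d i)).card).sum ≤
        (L.map fun i => 2 * (edgeSet n f i (!d i)).card).sum :=
      List.sum_le_sum fun i hi => Nat.mul_le_mul_left 2 <|
        card_edgeSet_sortDir_le f (ne_of_mem_of_not_mem hi hL.1) _ _
    calc (symmDiff (satSet n f) (satSet n (sortAlong d (j :: L) f))).card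
        ≤ (symmDiff (satSet n f) (satSet n g)).card +
            (symmDiff (satSet n g) (satSet n (sortAlong d L g))).card :=
          (card_le_card (symmDiff_triangle _ _ _)).trans (card_union_le _ _)
      _ ≤ 2 * (edgeSet n f j (!d j)).card +
            (L.map fun i => 2 * (edgeSet n f i (!d i)).card).sum :=
          Nat.add_le_add (card_symmDiff_sortDir_le f j (d j)) ((ih g hL.2).trans hedges)
      _ = ((j :: L).map fun i => 2 * (edgeSet n f i (!d i)).card).sum := by simp

lemma unate_of_monotoneToward {f : (Fin n → Bool) → Bool} {d : Fin n → Bool}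
    (h : ∀ i, MonotoneToward f i (d i)) : Unate n f := by
  intro i
  cases hd : d i
  · exact Or.inr fun x => by simpa [hd] using h i x
  · exact Or.inl fun x => by simpa [hd] using h i x

lemma mul_card_le_card_symmDiff_of_le_reldist {f g : (Fin n → Bool) → Bool} {ε : ℝ}
    (h : ε ≤ reldist n f g) :
    ε * (satSet n f).card ≤ (symmDiff (satSet n f) (satSet n g)).card := by
  rcases (Nat.cast_nonneg (α := ℝ) (satSet n f).card).eq_or_lt with hN | hN
  · rw [← hN, mul_zero]; positivity
  · exact (le_div_iff₀ hN).mp h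

end FarUnate

theorem far_from_unate_many_violations_general (n : ℕ) (f : (Fin n → Bool) → Bool)
    (ε : ℝ)
    (hfar : ∀ g : (Fin n → Bool) → Bool, Unate n g → ε ≤ reldist n f g)
    (d : Fin n → Bool) :
    ε * ((satSet n f).card : ℝ) / 8 ≤ ∑ i : Fin n, ((edgeSet n f i (!(d i))).card : ℝ) := by
  set g := FarUnate.sortAlong d (List.finRange n) f
  have hunate : Unate n g := FarUnate.unate_of_monotoneToward fun i =>
    FarUnate.monotoneToward_sortAlong f d (List.nodup_finRange n) (List.mem_finRange i)
  have hclose : ((symmDiff (satSet n f) (satSet n g)).card : ℝ) ≤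
      2 * ∑ i : Fin n, ((edgeSet n f i (!(d i))).card : ℝ) := by
    have := FarUnate.card_symmDiff_sortAlong_le f d (List.nodup_finRange n)
    rw [← Fin.sum_univ_def, ← mul_sum] at this
    exact_mod_cast this
  have hdist := FarUnate.mul_card_le_card_symmDiff_of_le_reldist (hfar g hunate)
  have hnonneg : 0 ≤ ∑ i : Fin n, ((edgeSet n f i (!(d i))).card : ℝ) := by positivity
  linarith

/-- If `f` is `ε`-far from unate in relative distance, then for every direction
vector `d ∈ {0,1}^n`, the total number of edges violating `d`-monotonicity is
at least `εN/8`. -/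
theorem far_from_unate_many_violations (n : ℕ) (f : (Fin n → Bool) → Bool)
    (hf : (satSet n f).Nonempty) (ε : ℝ)
    (hfar : ∀ g : (Fin n → Bool) → Bool, Unate n g → ε ≤ reldist n f g)
    (d : Fin n → Bool) :
    ε * ((satSet n f).card : ℝ) / 8 ≤ ∑ i : Fin n, ((edgeSet n f i (!(d i))).card : ℝ) :=
  far_from_unate_many_violations_general n f ε hfar d
end

section
/- If f: {0,1}^n → {0,1} is unate with f^{-1}(1) nonempty and N := |f^{-1}(1)|, then for all z, z' ∈ f^{-1}(1), the Hamming distance Δ(z, z') is at most 2·log₂(N). -/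
open Finset

/-!
A unate function has a preferred direction `g i` in every coordinate: moving the `i`-th bit
of a satisfying assignment to `g i` keeps it satisfying. Hence from any satisfying `z` one may
move any subset of the coordinates where `z` and `g` differ, giving `2 ^ Δ(z, g)` distinct
satisfying assignments, i.e. `Δ(z, g) ≤ log₂ N`. The triangle inequality through `g` finishes.
-/

section SubcubeClosed

variable {ι β : Type*} [DecidableEq ι] {s : Finset (ι → β)} {g : ι → β}

lemma piecewise_mem_of_forall_update_mem
    (hs : ∀ i, ∀ x ∈ s, Function.update x i (g i) ∈ s) (t : Finset ι) {x : ι → β}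
    (hx : x ∈ s) : t.piecewise g x ∈ s := by
  induction t using Finset.induction_on with
  | empty => simpa using hx
  | insert a t _ ih => rw [piecewise_insert]; exact hs a _ ih

lemma two_pow_hammingDist_le_card_of_forall_update_mem [Fintype ι] [DecidableEq β]
    (hs : ∀ i, ∀ x ∈ s, Function.update x i (g i) ∈ s) {z : ι → β} (hz : z ∈ s) :
    2 ^ hammingDist z g ≤ #s := by
  rw [hammingDist, ← card_powerset]
  refine card_le_card_of_injOn (fun t => t.piecewise g z)
    (fun t _ => piecewise_mem_of_forall_update_mem hs t hz) ?_
  intro t ht u hu htu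
  simp only [coe_powerset, Set.mem_preimage, Set.mem_powerset_iff, coe_subset] at ht hu
  ext i
  have hi : t.piecewise g z i = u.piecewise g z i := congrFun htu i
  constructor <;> intro hmem
  · by_contra hnot
    rw [piecewise_eq_of_mem _ _ _ hmem, piecewise_eq_of_notMem _ _ _ hnot] at hi
    exact (mem_filter.1 (ht hmem)).2 hi.symm
  · by_contra hnot
    rw [piecewise_eq_of_notMem _ _ _ hnot, piecewise_eq_of_mem _ _ _ hmem] at hi
    exact (mem_filter.1 (hu hmem)).2 hi

end SubcubeClosed

lemma nat_le_logb_two_of_two_pow_le {m N : ℕ} (h : 2 ^ m ≤ N) :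
    (m : ℝ) ≤ Real.logb 2 N := by
  have hN : (0 : ℝ) < N := by exact_mod_cast (Nat.two_pow_pos m).trans_le h
  rw [Real.le_logb_iff_rpow_le one_lt_two hN, Real.rpow_natCast]
  exact_mod_cast h

lemma apply_update_eq_true_of_forall_update_not {ι : Type*} [DecidableEq ι]
    {f : (ι → Bool) → Bool} {i : ι} {b : Bool}
    (h : ∀ x, f (Function.update x i (!b)) = true → f (Function.update x i b) = true)
    {x : ι → Bool} (hx : f x = true) : f (Function.update x i b) = true := by
  by_cases hxi : x i = b
  · rwa [Function.update_eq_self_iff.2 hxi.symm]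
  · exact h x (by rwa [Function.update_eq_self_iff.2 (Bool.eq_not_of_ne hxi).symm])

lemma Unate.exists_forall_update_mem_satSet {n : ℕ} {f : (Fin n → Bool) → Bool}
    (hU : Unate n f) :
    ∃ g : Fin n → Bool, ∀ i, ∀ x ∈ satSet n f, Function.update x i (g i) ∈ satSet n f := by
  simp only [satSet, mem_filter, mem_univ, true_and]
  have hdir : ∀ i, ∃ b : Bool, ∀ x, f x = true → f (Function.update x i b) = true := fun i =>
    (hU i).elim (fun h => ⟨true, fun _ => apply_update_eq_true_of_forall_update_not h⟩)
      (fun h => ⟨false, fun _ => apply_update_eq_true_of_forall_update_not h⟩)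
  choose g hg using hdir
  exact ⟨g, hg⟩

theorem unate_small_diameter_general (n : ℕ) (f : (Fin n → Bool) → Bool)
    (hU : Unate n f)
    (z z' : Fin n → Bool) (hz : z ∈ satSet n f) (hz' : z' ∈ satSet n f) :
    (hammingDist z z' : ℝ) ≤ 2 * Real.logb 2 ((satSet n f).card : ℝ) := by
  obtain ⟨g, hg⟩ := hU.exists_forall_update_mem_satSet
  have hlog : ∀ x ∈ satSet n f, (hammingDist x g : ℝ) ≤ Real.logb 2 #(satSet n f) :=
    fun x hx =>
      nat_le_logb_two_of_two_pow_le (two_pow_hammingDist_le_card_of_forall_update_mem hg hx)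
  calc (hammingDist z z' : ℝ) ≤ hammingDist z g + hammingDist z' g := by
        rw [hammingDist_comm z' g]; exact_mod_cast hammingDist_triangle z g z'
    _ ≤ 2 * Real.logb 2 #(satSet n f) := by linarith [hlog z hz, hlog z' hz']

/-- If `f` is unate, any two satisfying assignments have Hamming distance at
most `2·log₂ N`. -/
theorem unate_small_diameter (n : ℕ) (f : (Fin n → Bool) → Bool)
    (hU : Unate n f) (hf : (satSet n f).Nonempty)
    (z z' : Fin n → Bool) (hz : z ∈ satSet n f) (hz' : z' ∈ satSet n f) :
    (hammingDist z z' : ℝ) ≤ 2 * Real.logb 2 ((satSet n f).card : ℝ) :=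
  unate_small_diameter_general n f hU z z' hz hz'
end

section
/- Let f: {0,1}^n → {0,1} be unate, let a ∈ f^{-1}(1), let N := |f^{-1}(1)|, and let r be a real number with r ≥ 2·log₂(N). Then f is equal to its (r, a)-truncation, i.e., f(x) = f_{r,a}(x) for all x ∈ {0,1}^n. -/
open Finset

/-!
Unateness gives, for each coordinate `i`, a bit `g i` such that setting `x i := g i` never leaves
`f⁻¹(1)`. Let `x, a ∈ f⁻¹(1)` and split the coordinates where they differ into `T`, where `x`
agrees with `g`, and `S`, where `a` does. Pushing `a` towards `g` on any subset of `T` stays in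
`f⁻¹(1)` and gives `2^|T|` distinct points, so `2^|T| ≤ N`; likewise `2^|S| ≤ N` starting from `x`.
Hence `2^Δ(x,a) ≤ N²`, i.e. every satisfying assignment lies within `2·log₂ N` of `a`.
-/

theorem Finset.two_pow_card_le_card_of_piecewise_mem {ι α : Type*} [DecidableEq ι]
    {U : Finset ι} {g z : ι → α} {s : Finset (ι → α)} (hne : ∀ i ∈ U, g i ≠ z i)
    (hmem : ∀ V ⊆ U, V.piecewise g z ∈ s) : 2 ^ #U ≤ #s := by
  have hsubset : ∀ V ⊆ U, ∀ W, V.piecewise g z = W.piecewise g z → V ⊆ W := by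
    intro V hV W hVW i hiV
    by_contra hiW
    have hi := congrFun hVW i
    rw [piecewise_eq_of_mem _ _ _ hiV, piecewise_eq_of_notMem _ _ _ hiW] at hi
    exact hne i (hV hiV) hi
  calc 2 ^ #U = #U.powerset := (card_powerset U).symm
    _ ≤ #s := card_le_card_of_injOn (fun V => V.piecewise g z)
        (fun V hV => hmem V (mem_powerset.1 hV))
        (fun V hV W hW hVW => (hsubset V (mem_powerset.1 hV) W hVW).antisymm
          (hsubset W (mem_powerset.1 hW) V hVW.symm))

theorem update_sat_of_imp {n : ℕ} {f : (Fin n → Bool) → Bool} {i : Fin n} {b : Bool}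
    (h : ∀ x, f (Function.update x i (!b)) = true → f (Function.update x i b) = true)
    {y : Fin n → Bool} (hy : f y = true) : f (Function.update y i b) = true := by
  by_cases hyi : y i = b
  · rwa [← hyi, Function.update_eq_self]
  · apply h
    rwa [← Bool.eq_not_iff.2 hyi, Function.update_eq_self]

theorem Unate.exists_update_sat {n : ℕ} {f : (Fin n → Bool) → Bool} (hU : Unate n f)
    (i : Fin n) : ∃ b, ∀ y, f y = true → f (Function.update y i b) = true := by
  rcases hU i with h | h
  · exact ⟨true, fun y => update_sat_of_imp h⟩
  · exact ⟨false, fun y => update_sat_of_imp h⟩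

theorem piecewise_sat {n : ℕ} {f : (Fin n → Bool) → Bool} {g : Fin n → Bool}
    (hg : ∀ i y, f y = true → f (Function.update y i (g i)) = true)
    {z : Fin n → Bool} (hz : f z = true) (U : Finset (Fin n)) :
    f (U.piecewise g z) = true := by
  induction U using Finset.induction_on with
  | empty => rwa [piecewise_empty]
  | insert j U _ ih => rw [piecewise_insert]; exact hg j _ ih

theorem Unate.two_pow_hammingDist_le_card_sq {n : ℕ} {f : (Fin n → Bool) → Bool}
    (hU : Unate n f) {x a : Fin n → Bool} (hx : f x = true) (ha : f a = true) :
    2 ^ hammingDist x a ≤ #(satSet n f) ^ 2 := by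
  choose g hg using hU.exists_update_sat
  have hmem : ∀ {z}, f z = true → ∀ V : Finset (Fin n), V.piecewise g z ∈ satSet n f :=
    fun hz V => mem_filter.2 ⟨mem_univ _, piecewise_sat hg hz V⟩
  set D : Finset (Fin n) := {i | x i ≠ a i}
  have hT : 2 ^ #(D.filter fun i => x i = g i) ≤ #(satSet n f) :=
    two_pow_card_le_card_of_piecewise_mem (z := a)
      (fun i hi => (mem_filter.1 hi).2 ▸ (mem_filter.1 (mem_filter.1 hi).1).2)
      (fun V _ => hmem ha V)
  have hS : 2 ^ #(D.filter fun i => ¬x i = g i) ≤ #(satSet n f) :=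
    two_pow_card_le_card_of_piecewise_mem (z := x)
      (fun i hi => Ne.symm (mem_filter.1 hi).2) (fun V _ => hmem hx V)
  calc 2 ^ hammingDist x a
      = 2 ^ #(D.filter fun i => x i = g i) * 2 ^ #(D.filter fun i => ¬x i = g i) := by
        rw [← pow_add, card_filter_add_card_filter_not]; rfl
    _ ≤ #(satSet n f) ^ 2 := sq (#(satSet n f)) ▸ Nat.mul_le_mul hT hS

theorem Unate.hammingDist_le_two_mul_logb {n : ℕ} {f : (Fin n → Bool) → Bool}
    (hU : Unate n f) {x a : Fin n → Bool} (hx : f x = true) (ha : f a = true) :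
    (hammingDist x a : ℝ) ≤ 2 * Real.logb 2 #(satSet n f) := by
  have hN : (0 : ℝ) < #(satSet n f) :=
    Nat.cast_pos.2 (card_pos.2 ⟨a, mem_filter.2 ⟨mem_univ _, ha⟩⟩)
  calc (hammingDist x a : ℝ)
      = Real.logb 2 ((2 : ℝ) ^ hammingDist x a) := by
        rw [Real.logb_pow, Real.logb_self_eq_one one_lt_two, mul_one]
    _ ≤ Real.logb 2 ((#(satSet n f) : ℝ) ^ 2) :=
        Real.logb_le_logb_of_le one_lt_two (by positivity)
          (by exact_mod_cast hU.two_pow_hammingDist_le_card_sq hx ha)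
    _ = 2 * Real.logb 2 #(satSet n f) := by rw [Real.logb_pow]; norm_num

/-- A unate function equals its `(r,a)`-truncation for any `a ∈ f⁻¹(1)` and any
radius `r ≥ 2·log₂ N`. -/
theorem unate_eq_trunc (n : ℕ) (f : (Fin n → Bool) → Bool) (hU : Unate n f)
    (a : Fin n → Bool) (ha : a ∈ satSet n f) (r : ℝ)
    (hr : 2 * Real.logb 2 ((satSet n f).card : ℝ) ≤ r) :
    ∀ x : Fin n → Bool, f x = trunc n f r a x := by
  intro x
  cases hx : f x with
  | false => simp [trunc, hx]
  | true =>
    have hdist := hU.hammingDist_le_two_mul_logb hx (mem_filter.1 ha).2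
    simp [trunc, hx, hdist.trans hr]
end

section
/- Let f: {0,1}^n → {0,1}, let a ∈ f^{-1}(1), let N := |f^{-1}(1)|, and let r be a real number with r ≥ 2·log₂(N). Then the truncation f_{r,a} satisfies f_{r,a}^{-1}(1) ⊆ f^{-1}(1), and the number of nontrivial coordinates of f_{r,a} (coordinates i with Pr_{z∼f_{r,a}^{-1}(1)}[z_i = 1] ∉ {0,1}) is at most r·N. -/
open Finset

lemma logb_two_natCast_nonneg (m : ℕ) : 0 ≤ Real.logb 2 m :=
  div_nonneg (Real.log_natCast_nonneg m) (Real.log_nonneg one_le_two)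

section Truncation

variable (n : ℕ) (f : (Fin n → Bool) → Bool) (r : ℝ) (a : Fin n → Bool)

lemma trunc_eq_true_iff {x : Fin n → Bool} :
    trunc n f r a x = true ↔ (hammingDist x a : ℝ) ≤ r ∧ f x = true := by
  unfold trunc
  split_ifs with h <;> simp [h]

lemma satSet_trunc_subset : satSet n (trunc n f r a) ⊆ satSet n f := fun x hx => by
  simp only [satSet, mem_filter, mem_univ, true_and, trunc_eq_true_iff] at hx ⊢
  exact hx.2

lemma hammingDist_le_of_mem_satSet_trunc {z : Fin n → Bool}
    (hz : z ∈ satSet n (trunc n f r a)) : (hammingDist z a : ℝ) ≤ r := by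
  simp only [satSet, mem_filter, mem_univ, true_and, trunc_eq_true_iff] at hz
  exact hz.1

end Truncation

noncomputable def nontrivialCoords (n : ℕ) (g : (Fin n → Bool) → Bool) : Finset (Fin n) :=
  univ.filter fun i => prCoord n g i true ≠ 0 ∧ prCoord n g i true ≠ 1

section Nontrivial

variable (n : ℕ) (g : (Fin n → Bool) → Bool)

/-- This also covers `g⁻¹(1) = ∅`, where `prCoord` is `0 / 0 = 0`. -/
lemma prCoord_eq_zero_or_one_of_forall_eq {i : Fin n} {b : Bool}
    (h : ∀ z ∈ satSet n g, z i = b) : prCoord n g i true = 0 ∨ prCoord n g i true = 1 := by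
  unfold prCoord
  cases b
  · left
    rw [filter_false_of_mem fun z hz hzi => by simp [h z hz] at hzi, card_empty,
      Nat.cast_zero, zero_div]
  · rw [filter_true_of_mem h]
    rcases eq_or_ne ((satSet n g).card : ℝ) 0 with h0 | h0
    · simp [h0]
    · simp [div_self h0]

lemma exists_mem_satSet_ne_of_mem_nontrivialCoords (a : Fin n → Bool) {i : Fin n}
    (hi : i ∈ nontrivialCoords n g) : ∃ z ∈ satSet n g, z i ≠ a i := by
  by_contra! h
  simp only [nontrivialCoords, mem_filter, mem_univ, true_and] at hi
  rcases prCoord_eq_zero_or_one_of_forall_eq n g h with h0 | h1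
  exacts [hi.1 h0, hi.2 h1]

lemma card_nontrivialCoords_le_sum_hammingDist (a : Fin n → Bool) :
    (nontrivialCoords n g).card ≤ ∑ z ∈ satSet n g, hammingDist z a := by
  calc (nontrivialCoords n g).card
      ≤ ((satSet n g).biUnion fun z => univ.filter fun i => z i ≠ a i).card := by
        refine card_le_card fun i hi => ?_
        obtain ⟨z, hz, hzi⟩ := exists_mem_satSet_ne_of_mem_nontrivialCoords n g a hi
        exact mem_biUnion.2 ⟨z, hz, by simpa using hzi⟩
    _ ≤ ∑ z ∈ satSet n g, hammingDist z a := card_biUnion_le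

end Nontrivial

theorem trunc_subset_and_few_nontrivial_general (n : ℕ) (f : (Fin n → Bool) → Bool)
    (a : Fin n → Bool) (r : ℝ)
    (hr : 2 * Real.logb 2 ((satSet n f).card : ℝ) ≤ r) :
    satSet n (trunc n f r a) ⊆ satSet n f ∧
    ((Finset.univ.filter (fun i : Fin n =>
        prCoord n (trunc n f r a) i true ≠ 0 ∧ prCoord n (trunc n f r a) i true ≠ 1)).card : ℝ)
      ≤ r * ((satSet n f).card : ℝ) := by
  refine ⟨satSet_trunc_subset n f r a, ?_⟩
  have hr₀ : 0 ≤ r := le_trans (mul_nonneg zero_le_two (logb_two_natCast_nonneg _)) hr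
  calc ((nontrivialCoords n (trunc n f r a)).card : ℝ)
      ≤ ∑ z ∈ satSet n (trunc n f r a), (hammingDist z a : ℝ) := by
        exact_mod_cast card_nontrivialCoords_le_sum_hammingDist n (trunc n f r a) a
    _ ≤ ∑ _z ∈ satSet n (trunc n f r a), r :=
        sum_le_sum fun z hz => hammingDist_le_of_mem_satSet_trunc n f r a hz
    _ = (satSet n (trunc n f r a)).card * r := by rw [sum_const, nsmul_eq_mul]
    _ ≤ (satSet n f).card * r := by gcongr; exact satSet_trunc_subset n f r a
    _ = r * (satSet n f).card := mul_comm _ _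

/-- For `a ∈ f⁻¹(1)` and radius `r ≥ 2·log₂ N`, the truncation `f_{r,a}`
satisfies `f_{r,a}⁻¹(1) ⊆ f⁻¹(1)` and has at most `r·N` nontrivial coordinates. -/
theorem trunc_subset_and_few_nontrivial (n : ℕ) (f : (Fin n → Bool) → Bool)
    (a : Fin n → Bool) (ha : a ∈ satSet n f) (r : ℝ)
    (hr : 2 * Real.logb 2 ((satSet n f).card : ℝ) ≤ r) :
    satSet n (trunc n f r a) ⊆ satSet n f ∧
    ((Finset.univ.filter (fun i : Fin n =>
        prCoord n (trunc n f r a) i true ≠ 0 ∧ prCoord n (trunc n f r a) i true ≠ 1)).card : ℝ)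
      ≤ r * ((satSet n f).card : ℝ) :=
  trunc_subset_and_few_nontrivial_general n f a r hr
end

section
/- Let d̃ ∈ {0,1,*}^n be an arbitrary partial string, let ε > 0, and let h: {0,1}^n → {0,1} have h^{-1}(1) nonempty with reldist(h, g) ≥ ε/2 for every unate g: {0,1}^n → {0,1}. Then at least one of the following holds: (i) Σ_{i ∈ Fixed(d̃)} |Edge_i^{1−d̃_i}(h)| ≥ (ε/32)·|h^{-1}(1)|, or (ii) Σ_{i ∈ Unfixed(d̃)} min(|Edge_i^0(h)|, |Edge_i^1(h)|) ≥ (ε/32)·|h^{-1}(1)|. -/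
/-!
Sorting `f` along coordinate `i` towards `σ` (on every `i`-edge, the endpoint with `x i = σ`
gets the larger value of `f` on the edge) leaves no strictly `(!σ)`-monotone `i`-edge, changes
`f` only at the endpoints of such edges, and creates no new strictly `c`-monotone `j`-edge for
`j ≠ i`: on each two-dimensional `{i, j}`-face this is a finite check over the
16 restrictions of `f` to the face.
Sorting every coordinate `i` towards `σ i` thus gives a unate `g` with
`|h⁻¹(1) Δ g⁻¹(1)| ≤ 2 ∑ᵢ |Edgeᵢ^{!σ i}(h)|`. With `σ i = d̃ᵢ` on fixed coordinates and the
majority orientation on unfixed ones, this sum is exactly the sum of the two quantities in the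
statement, so if both were below `ε/32 · |h⁻¹(1)|`, then `g` would be `ε/8`-close to `h`.
-/

open Finset

open Function

section Sorting

variable {n : ℕ}

lemma mem_edgeSet {f : (Fin n → Bool) → Bool} {i : Fin n} {b : Bool} {x : Fin n → Bool} :
    x ∈ edgeSet n f i b ↔ x i = false ∧ f x = !b ∧ f (update x i true) = b := by
  simp [edgeSet]

lemma mem_symmDiff_satSet {f g : (Fin n → Bool) → Bool} {x : Fin n → Bool} :
    x ∈ symmDiff (satSet n f) (satSet n g) ↔ f x ≠ g x := by
  simp only [mem_symmDiff, satSet, mem_filter, mem_univ, true_and]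
  cases f x <;> cases g x <;> simp

lemma card_eq_sum_sum_update (i : Fin n) (S : Finset (Fin n → Bool)) :
    #S = ∑ y ∈ univ.filter (fun y : Fin n → Bool => y i = false),
      ∑ b : Bool, if update y i b ∈ S then 1 else 0 := by
  rw [show #S = ∑ x, if x ∈ S then 1 else 0 by simp,
    ← sum_product' (f := fun y b => if update y i b ∈ S then 1 else 0)]
  refine sum_nbij' (fun x => (update x i false, x i)) (fun p => update p.1 i p.2)
    (by simp) (by simp) (fun x _ => by simp) (fun p hp => ?_) (fun x _ => by simp)
  simp only [mem_product, mem_filter, mem_univ, true_and, and_true] at hp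
  ext j <;> simp [update_idem, ← hp, update_eq_self]

def sortCoord (f : (Fin n → Bool) → Bool) (i : Fin n) (σ : Bool) : (Fin n → Bool) → Bool :=
  fun x => if x i = σ then f (update x i false) || f (update x i true)
    else f (update x i false) && f (update x i true)

lemma sortCoord_update (f : (Fin n → Bool) → Bool) (i : Fin n) (σ : Bool) (y : Fin n → Bool)
    (b : Bool) :
    sortCoord f i σ (update y i b) = if b = σ then f (update y i false) || f (update y i true)
      else f (update y i false) && f (update y i true) := by
  simp [sortCoord]

lemma edgeSet_sortCoord_self (f : (Fin n → Bool) → Bool) (i : Fin n) (σ : Bool) :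
    edgeSet n (sortCoord f i σ) i (!σ) = ∅ := by
  refine eq_empty_of_forall_notMem fun x hx => ?_
  rw [mem_edgeSet] at hx
  obtain ⟨hxi, h0, h1⟩ := hx
  rw [← update_eq_self i x, hxi, sortCoord_update] at h0
  rw [sortCoord_update] at h1
  revert h0 h1
  cases σ <;> cases f (update x i false) <;> cases f (update x i true) <;> decide

lemma sum_update_mem_symmDiff_sortCoord_le (f : (Fin n → Bool) → Bool) (i : Fin n) (σ : Bool)
    {y : Fin n → Bool} (hy : y i = false) :
    ∑ b : Bool, (if update y i b ∈ symmDiff (satSet n f) (satSet n (sortCoord f i σ))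
      then 1 else 0) ≤ 2 * if y ∈ edgeSet n f i (!σ) then 1 else 0 := by
  have hy0 : update y i false = y := by rw [← hy, update_eq_self]
  simp only [Fintype.sum_bool, mem_symmDiff_satSet, sortCoord_update, mem_edgeSet, hy,
    Bool.not_not, true_and]
  rw [hy0]
  cases σ <;> cases f y <;> cases f (update y i true) <;> decide

lemma sum_update_mem_edgeSet_sortCoord_le (f : (Fin n → Bool) → Bool) {i j : Fin n}
    (hji : j ≠ i) (σ c : Bool) (y : Fin n → Bool) :
    ∑ b : Bool, (if update y i b ∈ edgeSet n (sortCoord f i σ) j c then 1 else 0) ≤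
      ∑ b : Bool, if update y i b ∈ edgeSet n f j c then 1 else 0 := by
  simp only [Fintype.sum_bool, mem_edgeSet, update_of_ne hji, update_comm hji.symm _ _ y,
    sortCoord_update]
  cases y j
  · cases σ <;> cases c <;> cases f (update y i false) <;> cases f (update y i true) <;>
      cases f (update (update y j true) i false) <;> cases f (update (update y j true) i true) <;>
      decide
  · simp

lemma card_symmDiff_sortCoord_le (f : (Fin n → Bool) → Bool) (i : Fin n) (σ : Bool) :
    #(symmDiff (satSet n f) (satSet n (sortCoord f i σ))) ≤ 2 * #(edgeSet n f i (!σ)) := by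
  have hsub : edgeSet n f i (!σ) = (univ.filter fun y : Fin n → Bool => y i = false).filter
      (· ∈ edgeSet n f i (!σ)) := by
    ext y
    simp +contextual [mem_edgeSet]
  rw [card_eq_sum_sum_update i, hsub, card_filter, mul_sum]
  exact sum_le_sum fun y hy => sum_update_mem_symmDiff_sortCoord_le f i σ (mem_filter.mp hy).2

lemma card_edgeSet_sortCoord_le (f : (Fin n → Bool) → Bool) {i j : Fin n} (hji : j ≠ i)
    (σ c : Bool) : #(edgeSet n (sortCoord f i σ) j c) ≤ #(edgeSet n f j c) := by
  rw [card_eq_sum_sum_update i, card_eq_sum_sum_update i (edgeSet n f j c)]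
  exact sum_le_sum fun y _ => sum_update_mem_edgeSet_sortCoord_le f hji σ c y

lemma unate_of_forall_edgeSet_eq_empty (g : (Fin n → Bool) → Bool) (σ : Fin n → Bool)
    (hg : ∀ i, edgeSet n g i (!σ i) = ∅) : Unate n g := by
  intro i
  have hi : ∀ x, update x i false ∉ edgeSet n g i (!σ i) := by simp [hg i]
  cases hσ : σ i
  · right
    intro x hx
    simpa [mem_edgeSet, hσ, update_idem, hx] using hi x
  · left
    intro x hx
    simpa [mem_edgeSet, hσ, update_idem, hx] using hi x

lemma exists_edgeSet_eq_empty_on_card_symmDiff_le (h : (Fin n → Bool) → Bool)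
    (σ : Fin n → Bool) (s : Finset (Fin n)) :
    ∃ g, (∀ i ∈ s, edgeSet n g i (!σ i) = ∅) ∧
      (∀ j ∉ s, ∀ c, #(edgeSet n g j c) ≤ #(edgeSet n h j c)) ∧
      #(symmDiff (satSet n h) (satSet n g)) ≤ 2 * ∑ i ∈ s, #(edgeSet n h i (!σ i)) := by
  induction s using Finset.induction_on with
  | empty => exact ⟨h, by simp, fun _ _ _ => le_rfl, by simp⟩
  | insert i s hi ih =>
    obtain ⟨g, hsorted, hle, hdist⟩ := ih
    refine ⟨sortCoord g i (σ i), fun k hk => ?_, fun j hj c => ?_, ?_⟩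
    · rcases mem_insert.mp hk with rfl | hk
      · exact edgeSet_sortCoord_self g k (σ k)
      · have hmono := card_edgeSet_sortCoord_le g (ne_of_mem_of_not_mem hk hi) (σ i) (!σ k)
        rwa [hsorted k hk, card_empty, Nat.le_zero, card_eq_zero] at hmono
    · rw [mem_insert, not_or] at hj
      exact (card_edgeSet_sortCoord_le g hj.1 _ _).trans (hle j hj.2 c)
    · calc #(symmDiff (satSet n h) (satSet n (sortCoord g i (σ i))))
          ≤ #(symmDiff (satSet n h) (satSet n g)) +
              #(symmDiff (satSet n g) (satSet n (sortCoord g i (σ i)))) :=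
            (card_le_card (symmDiff_triangle _ _ _)).trans (card_union_le _ _)
        _ ≤ 2 * ∑ k ∈ s, #(edgeSet n h k (!σ k)) + 2 * #(edgeSet n h i (!σ i)) :=
            add_le_add hdist ((card_symmDiff_sortCoord_le g i (σ i)).trans
              (Nat.mul_le_mul_left 2 (hle i hi _)))
        _ = 2 * ∑ k ∈ insert i s, #(edgeSet n h k (!σ k)) := by rw [sum_insert hi]; ring

lemma exists_unate_card_symmDiff_le (h : (Fin n → Bool) → Bool) (σ : Fin n → Bool) :
    ∃ g, Unate n g ∧
      #(symmDiff (satSet n h) (satSet n g)) ≤ 2 * ∑ i, #(edgeSet n h i (!σ i)) := by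
  obtain ⟨g, hsorted, -, hdist⟩ := exists_edgeSet_eq_empty_on_card_symmDiff_le h σ univ
  exact ⟨g, unate_of_forall_edgeSet_eq_empty g σ fun i => hsorted i (mem_univ i), hdist⟩

def orientation (h : (Fin n → Bool) → Bool) (d : Fin n → Option Bool) (i : Fin n) :
    Bool :=
  (d i).elim (decide (#(edgeSet n h i false) ≤ #(edgeSet n h i true))) id

lemma sum_card_edgeSet_orientation (h : (Fin n → Bool) → Bool)
    (d : Fin n → Option Bool) :
    ∑ i, (#(edgeSet n h i (!orientation h d i)) : ℝ) =
      ∑ i : Fin n, (d i).elim (0 : ℝ) (fun b => ((edgeSet n h i (!b)).card : ℝ)) +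
      ∑ i ∈ Finset.univ.filter (fun i : Fin n => d i = none),
        ((min (edgeSet n h i false).card (edgeSet n h i true).card : ℕ) : ℝ) := by
  rw [sum_filter, ← sum_add_distrib]
  refine sum_congr rfl fun i _ => ?_
  cases hd : d i with
  | some b => simp [orientation, hd]
  | none =>
    by_cases hle : #(edgeSet n h i false) ≤ #(edgeSet n h i true)
    · simp [orientation, hd, hle]
    · simp [orientation, hd, hle, (not_le.mp hle).le]

end Sorting

theorem far_from_unate_fixed_or_unfixed_general (n : ℕ) (d : Fin n → Option Bool)
    (ε : ℝ) (h : (Fin n → Bool) → Bool)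
    (hfar : ∀ g : (Fin n → Bool) → Bool, Unate n g → ε / 2 ≤ reldist n h g) :
    (ε / 32) * ((satSet n h).card : ℝ) ≤
        ∑ i : Fin n, (d i).elim (0 : ℝ) (fun b => ((edgeSet n h i (!b)).card : ℝ)) ∨
    (ε / 32) * ((satSet n h).card : ℝ) ≤
        ∑ i ∈ Finset.univ.filter (fun i : Fin n => d i = none),
          ((min (edgeSet n h i false).card (edgeSet n h i true).card : ℕ) : ℝ) := by
  obtain ⟨g, hg, hdist⟩ := exists_unate_card_symmDiff_le h (orientation h d)
  have hdist' : (#(symmDiff (satSet n h) (satSet n g)) : ℝ) ≤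
      2 * ∑ i, (#(edgeSet n h i (!orientation h d i)) : ℝ) := by exact_mod_cast hdist
  rw [sum_card_edgeSet_orientation] at hdist'
  have hfixed_nonneg : 0 ≤ ∑ i : Fin n, (d i).elim (0 : ℝ) (fun b => ((edgeSet n h i (!b)).card : ℝ)) :=
    sum_nonneg fun i _ => by cases d i <;> simp
  by_contra! hlt
  obtain ⟨hfixed_lt, hunfixed_lt⟩ := hlt
  have hS : (0 : ℝ) < #(satSet n h) :=
    (Nat.cast_nonneg _).lt_of_ne fun h0 => by rw [← h0, mul_zero] at hfixed_lt; linarith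
  have hclose := (le_div_iff₀ hS).mp (hfar g hg)
  linarith

/-- If `h` is `ε/2`-far from unate in relative distance, then for any partial
string `d̃`, either the fixed coordinates carry many violating edges, or the
unfixed coordinates do. -/
theorem far_from_unate_fixed_or_unfixed (n : ℕ) (d : Fin n → Option Bool)
    (ε : ℝ) (hε : 0 < ε) (h : (Fin n → Bool) → Bool) (hh : (satSet n h).Nonempty)
    (hfar : ∀ g : (Fin n → Bool) → Bool, Unate n g → ε / 2 ≤ reldist n h g) :
    (ε / 32) * ((satSet n h).card : ℝ) ≤
        ∑ i : Fin n, (d i).elim (0 : ℝ) (fun b => ((edgeSet n h i (!b)).card : ℝ)) ∨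
    (ε / 32) * ((satSet n h).card : ℝ) ≤
        ∑ i ∈ Finset.univ.filter (fun i : Fin n => d i = none),
          ((min (edgeSet n h i false).card (edgeSet n h i true).card : ℕ) : ℝ) :=
  far_from_unate_fixed_or_unfixed_general n d ε h hfar
end

section
/- Let f: {0,1}^n → {0,1}, let M ≥ 0 be a real number, let d̃ ∈ {0,1,*}^n, let i ∈ Unfixed(d̃), and let b ∈ {0,1}. Then every edge of the truncation f_{M,d̃} that is strictly b-monotone in direction i is also strictly b-monotone in f in direction i; i.e., Edge_i^b(f_{M,d̃}) ⊆ Edge_i^b(f). -/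
open Finset

theorem distPartial_update_of_eq_none (n : ℕ) (x : Fin n → Bool) (d : Fin n → Option Bool)
    (i : Fin n) (hi : d i = none) (c : Bool) :
    distPartial n (Function.update x i c) d = distPartial n x d := by
  unfold distPartial
  congr 1
  refine Finset.filter_congr fun j _ => ?_
  rcases eq_or_ne j i with rfl | hj
  · simp [hi]
  · rw [Function.update_of_ne hj]

/-- Both points lie on the same side of the threshold, and beyond it `truncP` is constantly
`false`. -/
theorem truncP_eq_of_distPartial_eq {n : ℕ} {f : (Fin n → Bool) → Bool} {M : ℝ}
    {d : Fin n → Option Bool} {x y : Fin n → Bool} (hxy : distPartial n x d = distPartial n y d)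
    (hne : truncP n f M d x ≠ truncP n f M d y) :
    truncP n f M d x = f x ∧ truncP n f M d y = f y := by
  unfold truncP at hne ⊢
  rw [hxy] at hne ⊢
  split_ifs at hne ⊢ <;> simp_all

theorem truncP_edgeSet_subset_general (n : ℕ) (f : (Fin n → Bool) → Bool)
    (M : ℝ) (d : Fin n → Option Bool)
    (i : Fin n) (hi : d i = none) (b : Bool) :
    edgeSet n (truncP n f M d) i b ⊆ edgeSet n f i b := by
  intro x hx
  simp only [edgeSet, Finset.mem_filter, Finset.mem_univ, true_and] at hx ⊢
  obtain ⟨hxi, hlow, hhigh⟩ := hx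
  have hsep : truncP n f M d x ≠ truncP n f M d (Function.update x i true) := by
    rw [hlow, hhigh]; exact Bool.not_ne_self b
  obtain ⟨hfx, hfy⟩ :=
    truncP_eq_of_distPartial_eq (distPartial_update_of_eq_none n x d i hi true).symm hsep
  exact ⟨hxi, hfx ▸ hlow, hfy ▸ hhigh⟩

/-- On an unfixed coordinate of `d̃`, every strictly `b`-monotone edge of the
truncation `f_{M,d̃}` is also a strictly `b`-monotone edge of `f`. -/
theorem truncP_edgeSet_subset (n : ℕ) (f : (Fin n → Bool) → Bool)
    (M : ℝ) (hM : 0 ≤ M) (d : Fin n → Option Bool)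
    (i : Fin n) (hi : d i = none) (b : Bool) :
    edgeSet n (truncP n f M d) i b ⊆ edgeSet n f i b :=
  truncP_edgeSet_subset_general n f M d i hi b
end

section
/- Edge-isoperimetric inequality (Harper, Bernstein, Lindsey, Hart): For any nonempty set S ⊆ {0,1}^n, the number of ordered pairs (x, y) ∈ S × S such that x and y are neighbors in the hypercube (i.e., have Hamming distance exactly 1) is at most |S|·log₂|S|. -/
/-!
Split `S` along a coordinate `i` on which two of its points differ, into halves `S₀` and `S₁`.
Neighbor pairs inside one half are counted by induction. A neighbor pair crossing direction `i`
is determined by either endpoint, so there are at most `2 · min |S₀| |S₁|` of them. What remains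
is the numerical inequality `a log₂ a + b log₂ b + 2 min a b ≤ (a + b) log₂ (a + b)`, which for
`b ≤ a` follows from `log₂ (1 + b / a) ≥ b / a` (Bernoulli) and `log₂ (a + b) ≥ 1 + log₂ b`.
-/

open Finset

namespace Real

lemma le_logb_two_one_add {t : ℝ} (h0 : 0 ≤ t) (h1 : t ≤ 1) : t ≤ logb 2 (1 + t) := by
  rw [le_logb_iff_rpow_le one_lt_two (by linarith)]
  simpa [one_add_one_eq_two, add_comm] using
    rpow_one_add_le_one_add_mul_self (s := 1) (by norm_num) h0 h1

lemma mul_logb_add_mul_logb_add_two_mul_min_le {a b : ℝ} (ha : 0 ≤ a) (hb : 0 ≤ b) :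
    a * logb 2 a + b * logb 2 b + 2 * min a b ≤ (a + b) * logb 2 (a + b) := by
  wlog hba : b ≤ a generalizing a b
  · have := this hb ha (le_of_not_ge hba)
    rw [min_comm, add_comm b a] at this
    linarith
  rcases hb.eq_or_lt with rfl | hb
  · simp [min_eq_right ha]
  have ha : 0 < a := hb.trans_le hba
  rw [min_eq_right hba]
  have hgain_a : a * logb 2 a + b ≤ a * logb 2 (a + b) := by
    have h := le_logb_two_one_add (div_nonneg hb.le ha.le) ((div_le_one ha).2 hba)
    rw [show 1 + b / a = (a + b) / a by field_simp, logb_div (by positivity) ha.ne',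
      div_le_iff₀' ha] at h
    linarith
  have hgain_b : b * logb 2 b + b ≤ b * logb 2 (a + b) := by
    have h : logb 2 (2 * b) ≤ logb 2 (a + b) := logb_le_logb_of_le one_lt_two (by positivity)
      (by linarith)
    rw [logb_mul two_ne_zero hb.ne', logb_self_eq_one one_lt_two] at h
    linarith [mul_le_mul_of_nonneg_left h hb.le]
  linarith

end Real

section Hypercube

variable {ι : Type*} [Fintype ι] {β : ι → Type*} [∀ i, DecidableEq (β i)]

lemma eq_update_of_hammingDist_eq_one [DecidableEq ι] {x y : ∀ i, β i} {i : ι}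
    (h : hammingDist x y = 1) (hi : x i ≠ y i) : y = Function.update x i (y i) := by
  funext j
  by_cases hj : j = i
  · subst hj; simp
  · rw [Function.update_of_ne hj]
    by_contra hne
    exact hj (Finset.card_le_one.mp h.le j (by simpa [eq_comm] using hne) i (by simpa using hi))

def neighborPairs (S : Finset (∀ i, β i)) : Finset ((∀ i, β i) × (∀ i, β i)) :=
  (S ×ˢ S).filter (fun p => hammingDist p.1 p.2 = 1)

lemma neighborPairs_filter_eq (S : Finset (∀ i, β i)) (i : ι) (b : β i) :
    {p ∈ neighborPairs S | p.1 i = b ∧ p.2 i = b} = neighborPairs {x ∈ S | x i = b} := by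
  ext ⟨x, y⟩
  simp only [neighborPairs, mem_filter, mem_product]
  tauto

lemma card_neighborPairs_filter_le_min [DecidableEq ι] (S : Finset (∀ i, β i)) (i : ι)
    {b c : β i} (hbc : b ≠ c) :
    #{p ∈ neighborPairs S | p.1 i = b ∧ p.2 i = c} ≤
      min #{x ∈ S | x i = b} #{x ∈ S | x i = c} := by
  simp only [neighborPairs, filter_filter]
  refine le_min (card_le_card_of_injOn Prod.fst ?_ ?_) (card_le_card_of_injOn Prod.snd ?_ ?_)
  · rintro ⟨x, y⟩ hp
    simp only [coe_filter, mem_product, Set.mem_ofPred_eq] at hp ⊢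
    exact ⟨hp.1.1, hp.2.2.1⟩
  · rintro ⟨x, y⟩ hp ⟨x', y'⟩ hp' (rfl : x = x')
    simp only [coe_filter, mem_product, Set.mem_ofPred_eq] at hp hp'
    obtain ⟨-, hd, hxb, hyc⟩ := hp
    obtain ⟨-, hd', -, hyc'⟩ := hp'
    rw [eq_update_of_hammingDist_eq_one hd (by rwa [hxb, hyc]),
      eq_update_of_hammingDist_eq_one hd' (by rwa [hxb, hyc']), hyc, hyc']
  · rintro ⟨x, y⟩ hp
    simp only [coe_filter, mem_product, Set.mem_ofPred_eq] at hp ⊢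
    exact ⟨hp.1.2, hp.2.2.2⟩
  · rintro ⟨x, y⟩ hp ⟨x', y'⟩ hp' (rfl : y = y')
    simp only [coe_filter, mem_product, Set.mem_ofPred_eq] at hp hp'
    obtain ⟨-, hd, hxb, hyc⟩ := hp
    obtain ⟨-, hd', hxb', -⟩ := hp'
    rw [hammingDist_comm] at hd hd'
    rw [eq_update_of_hammingDist_eq_one hd (by rwa [hxb, hyc, ne_comm]),
      eq_update_of_hammingDist_eq_one hd' (by rwa [hxb', hyc, ne_comm]), hxb, hxb']

lemma card_neighborPairs_le_add_two_mul_min [DecidableEq ι] (S : Finset (ι → Bool)) (i : ι) :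
    #(neighborPairs S) ≤ #(neighborPairs {x ∈ S | x i = false}) +
      #(neighborPairs {x ∈ S | x i = true}) +
      2 * min #{x ∈ S | x i = false} #{x ∈ S | x i = true} := by
  rw [card_eq_sum_card_fiberwise (f := fun p => (p.1 i, p.2 i)) (t := univ) (by simp)]
  simp only [Fintype.sum_prod_type, Fintype.sum_bool, Prod.mk.injEq, neighborPairs_filter_eq]
  have hft := card_neighborPairs_filter_le_min S i Bool.false_ne_true
  have htf := card_neighborPairs_filter_le_min S i Bool.false_ne_true.symm
  rw [min_comm] at htf
  omega

lemma neighborPairs_eq_empty_of_card_le_one {S : Finset (∀ i, β i)} (hS : #S ≤ 1) :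
    neighborPairs S = ∅ := by
  refine filter_eq_empty_iff.2 fun ⟨x, y⟩ hxy => ?_
  rw [mem_product] at hxy
  simp [card_le_one.1 hS x hxy.1 y hxy.2]

theorem card_neighborPairs_le_mul_logb [DecidableEq ι] (S : Finset (ι → Bool)) :
    (#(neighborPairs S) : ℝ) ≤ #S * Real.logb 2 #S := by
  induction S using Finset.strongInduction with
  | H S ih =>
  rcases le_or_gt #S 1 with hS | hS
  · rw [neighborPairs_eq_empty_of_card_le_one hS, card_empty, Nat.cast_zero]
    exact mul_nonneg (Nat.cast_nonneg _)
      (div_nonneg (Real.log_natCast_nonneg _) (Real.log_nonneg one_le_two))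
  obtain ⟨x, hx, y, hy, hxy⟩ := one_lt_card.1 hS
  obtain ⟨i, hi⟩ := Function.ne_iff.1 hxy
  have hsplit : #S = #{x ∈ S | x i = false} + #{x ∈ S | x i = true} := by
    rw [card_eq_sum_card_fiberwise (f := fun x => x i) (t := univ)
      (fun _ _ => mem_univ _), Fintype.sum_bool, add_comm]
  have hssubset (b : Bool) : {x ∈ S | x i = b} ⊂ S := by
    refine filter_ssubset.2 ?_
    by_cases hxb : x i = b
    · exact ⟨y, hy, hxb ▸ hi.symm⟩
    · exact ⟨x, hx, hxb⟩
  calc (#(neighborPairs S) : ℝ)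
      ≤ #(neighborPairs {x ∈ S | x i = false}) + #(neighborPairs {x ∈ S | x i = true}) +
          2 * min (#{x ∈ S | x i = false} : ℝ) #{x ∈ S | x i = true} := by
        exact_mod_cast card_neighborPairs_le_add_two_mul_min S i
    _ ≤ #{x ∈ S | x i = false} * Real.logb 2 #{x ∈ S | x i = false} +
          #{x ∈ S | x i = true} * Real.logb 2 #{x ∈ S | x i = true} +
          2 * min (#{x ∈ S | x i = false} : ℝ) #{x ∈ S | x i = true} := by
        gcongr
        exacts [ih _ (hssubset false), ih _ (hssubset true)]
    _ ≤ #S * Real.logb 2 #S := by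
        rw [hsplit, Nat.cast_add]
        exact Real.mul_logb_add_mul_logb_add_two_mul_min_le (Nat.cast_nonneg _)
          (Nat.cast_nonneg _)

end Hypercube

theorem edge_isoperimetric_general (n : ℕ) (S : Finset (Fin n → Bool)) :
    (((S ×ˢ S).filter (fun p : (Fin n → Bool) × (Fin n → Bool) =>
        hammingDist p.1 p.2 = 1)).card : ℝ)
      ≤ (S.card : ℝ) * Real.logb 2 (S.card : ℝ) :=
  card_neighborPairs_le_mul_logb S

/-- Edge-isoperimetric inequality (Harper, Bernstein, Lindsey, Hart): a nonempty
set `S ⊆ {0,1}^n` spans at most `|S|·log₂|S|` ordered pairs of hypercube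
neighbors. -/
theorem edge_isoperimetric (n : ℕ) (S : Finset (Fin n → Bool)) (hS : S.Nonempty) :
    (((S ×ˢ S).filter (fun p : (Fin n → Bool) × (Fin n → Bool) =>
        hammingDist p.1 p.2 = 1)).card : ℝ)
      ≤ (S.card : ℝ) * Real.logb 2 (S.card : ℝ) :=
  edge_isoperimetric_general n S
end

section
/- Let f: {0,1}^n → {0,1} with N := |f^{-1}(1)| ≥ 1, and for each i ∈ [n] let F_i denote the set of points x ∈ {0,1}^n with f(x) = f(x ⊕ e_i) = 1. Suppose I ⊆ [n] satisfies |I| > 100·log₂(N). Then when i is drawn uniformly at random from I, the event |F_i| ≤ N/20 holds with probability at least 1/2; equivalently, the number of i ∈ I with |F_i| ≤ N/20 is at least |I|/2. -/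
open Finset

/-! The heart of the matter is the edge-isoperimetric inequality of the hypercube, in the weak form
`∑ᵢ |{x ∈ S | x ⊕ eᵢ ∈ S}| ≤ 2 |S| log₂ |S|`. It follows by induction on `|S|`, splitting `S`
into two nonempty halves `S₀, S₁` along a coordinate `j` on which `S` is not constant: pairs in
directions `i ≠ j` stay inside a half, pairs in direction `j` cross between the halves and number
at most `2 min(|S₀|, |S₁|)`, and `a log a + b log b + min(a, b) ≤ (a + b) log (a + b)`.
Applied to `S = f⁻¹(1)` this gives `∑ᵢ |Fᵢ| ≤ 2 N log₂ N`, so by Markov's inequality at most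
`40 log₂ N < |I| / 2` coordinates `i ∈ I` have `|Fᵢ| > N / 20`. -/

open Real

lemma mul_logb_add_mul_logb_add_min_le {a b : ℝ} (ha : 0 < a) (hb : 0 < b) :
    a * logb 2 a + b * logb 2 b + min a b ≤ (a + b) * logb 2 (a + b) := by
  wlog hab : a ≤ b generalizing a b
  · have := this hb ha (le_of_not_ge hab)
    rw [min_comm, add_comm b a] at this
    linarith
  have hla : 1 + logb 2 a ≤ logb 2 (a + b) :=
    calc 1 + logb 2 a = logb 2 (2 * a) := by
          rw [logb_mul two_ne_zero ha.ne', logb_self_eq_one one_lt_two]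
      _ ≤ logb 2 (a + b) := logb_le_logb_of_le one_lt_two (by positivity) (by linarith)
  have hlb : logb 2 b ≤ logb 2 (a + b) := logb_le_logb_of_le one_lt_two hb (by linarith)
  rw [min_eq_left hab]
  nlinarith [mul_le_mul_of_nonneg_left hla ha.le, mul_le_mul_of_nonneg_left hlb hb.le]

section Hypercube

variable {n : ℕ}

lemma flipBit_apply_self (x : Fin n → Bool) (i : Fin n) : flipBit n x i i = !x i := by
  simp [flipBit]

lemma flipBit_apply_of_ne (x : Fin n → Bool) {i j : Fin n} (h : j ≠ i) :
    flipBit n x i j = x j := by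
  simp [flipBit, Function.update_of_ne h]

lemma flipBit_ne_self (x : Fin n → Bool) (i : Fin n) : flipBit n x i ≠ x := fun h => by
  simpa [flipBit_apply_self] using congrFun h i

lemma flipBit_involutive (i : Fin n) : Function.Involutive (flipBit n · i) := fun x => by
  funext j
  rcases eq_or_ne j i with rfl | h
  · simp [flipBit_apply_self]
  · simp [flipBit_apply_of_ne _ h]

/-- With `S = f⁻¹(1)`, `edgesBetween S S i` is the set `F_i`: the ordered pair `(x, x ⊕ e_i)` is
recorded by its first point. -/
def edgesBetween (A B : Finset (Fin n → Bool)) (i : Fin n) : Finset (Fin n → Bool) :=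
  {x ∈ A | flipBit n x i ∈ B}

variable {A B C S : Finset (Fin n → Bool)} {i j : Fin n}

lemma edgesBetween_subset_left : edgesBetween A B i ⊆ A :=
  filter_subset _ _

lemma card_edgesBetween_le_left : #(edgesBetween A B i) ≤ #A :=
  card_le_card edgesBetween_subset_left

lemma card_edgesBetween_le_right : #(edgesBetween A B i) ≤ #B :=
  card_le_card_of_injOn (flipBit n · i) (fun _ hx => (mem_filter.mp hx).2)
    (flipBit_involutive i).injective.injOn

lemma edgesBetween_union_left :
    edgesBetween (A ∪ B) C i = edgesBetween A C i ∪ edgesBetween B C i :=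
  filter_union _ _ _

lemma edgesBetween_union_right :
    edgesBetween A (B ∪ C) i = edgesBetween A B i ∪ edgesBetween A C i := by
  simp only [edgesBetween, mem_union]
  exact filter_or _ _ _

lemma card_edgesBetween_union_self (h : Disjoint A B) :
    #(edgesBetween (A ∪ B) (A ∪ B) i) = #(edgesBetween A A i) + #(edgesBetween A B i)
      + (#(edgesBetween B A i) + #(edgesBetween B B i)) := by
  have hsplit : ∀ C, Disjoint (edgesBetween C A i) (edgesBetween C B i) := fun C =>
    disjoint_filter.mpr fun _ _ hA hB => disjoint_left.mp h hA hB
  rw [edgesBetween_union_left, card_union_of_disjoint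
      (h.mono edgesBetween_subset_left edgesBetween_subset_left),
    edgesBetween_union_right, edgesBetween_union_right,
    card_union_of_disjoint (hsplit A), card_union_of_disjoint (hsplit B)]

lemma edgesBetween_self_eq_empty_of_card_le_one (hS : #S ≤ 1) : edgesBetween S S i = ∅ :=
  filter_eq_empty_iff.mpr fun x hx hflip =>
    flipBit_ne_self x i (card_le_one.mp hS _ hflip _ hx)

lemma edgesBetween_filter_eq_empty_of_ne {b c : Bool} (hij : i ≠ j) (hbc : b ≠ c) :
    edgesBetween {x ∈ A | x j = b} {x ∈ B | x j = c} i = ∅ :=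
  filter_eq_empty_iff.mpr fun x hx hflip => hbc <| by
    rw [← (mem_filter.mp hx).2, ← (mem_filter.mp hflip).2, flipBit_apply_of_ne _ hij.symm]

lemma sum_card_edgesBetween_filter_le {b c : Bool} (hbc : b ≠ c) :
    ∑ i, #(edgesBetween {x ∈ A | x j = b} {x ∈ B | x j = c} i)
      ≤ min #{x ∈ A | x j = b} #{x ∈ B | x j = c} := by
  rw [sum_eq_single j (fun i _ hij => by rw [edgesBetween_filter_eq_empty_of_ne hij hbc]; rfl)
    (absurd (mem_univ j))]
  exact le_min card_edgesBetween_le_left card_edgesBetween_le_right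

lemma exists_forall_filter_apply_eq_nonempty (hS : 1 < #S) :
    ∃ j, ∀ b : Bool, ({x ∈ S | x j = b}).Nonempty := by
  obtain ⟨x, hx, y, hy, hxy⟩ := one_lt_card.mp hS
  obtain ⟨j, hj⟩ := Function.ne_iff.mp hxy
  refine ⟨j, fun b => ?_⟩
  by_cases hxb : x j = b
  · exact ⟨x, mem_filter.mpr ⟨hx, hxb⟩⟩
  · refine ⟨y, mem_filter.mpr ⟨hy, ?_⟩⟩
    revert hj hxb
    cases x j <;> cases y j <;> cases b <;> simp

lemma sum_card_edgesBetween_self_le_of_split (j : Fin n) :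
    ∑ i, #(edgesBetween S S i)
      ≤ ∑ i, #(edgesBetween {x ∈ S | x j = false} {x ∈ S | x j = false} i)
        + ∑ i, #(edgesBetween {x ∈ S | x j = true} {x ∈ S | x j = true} i)
        + 2 * min #{x ∈ S | x j = false} #{x ∈ S | x j = true} := by
  have hunion := filter_union_filter_not_eq (fun x : Fin n → Bool => x j = false) S
  have hdisj := disjoint_filter_filter_not S S (fun x : Fin n → Bool => x j = false)
  simp only [Bool.not_eq_false] at hunion hdisj
  have h01 := sum_card_edgesBetween_filter_le (A := S) (B := S) (j := j) Bool.false_ne_true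
  have h10 := sum_card_edgesBetween_filter_le (A := S) (B := S) (j := j) Bool.false_ne_true.symm
  rw [min_comm] at h10
  conv_lhs => rw [← hunion]
  simp only [card_edgesBetween_union_self hdisj, sum_add_distrib]
  omega

end Hypercube

theorem sum_card_edgesBetween_self_le {n : ℕ} (S : Finset (Fin n → Bool)) :
    (∑ i, #(edgesBetween S S i) : ℝ) ≤ 2 * #S * logb 2 #S := by
  induction S using Finset.strongInduction with
  | H S ih =>
  rcases le_or_gt #S 1 with hS | hS
  · simp only [edgesBetween_self_eq_empty_of_card_le_one hS, card_empty, Nat.cast_zero,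
      sum_const_zero]
    rcases Nat.le_one_iff_eq_zero_or_eq_one.mp hS with h | h <;> simp [h]
  obtain ⟨j, hne⟩ := exists_forall_filter_apply_eq_nonempty hS
  have hsub : ∀ b, {x ∈ S | x j = b} ⊂ S := fun b =>
    let ⟨x, hx⟩ := hne (!b)
    filter_ssubset.mpr ⟨x, (mem_filter.mp hx).1, by simp [(mem_filter.mp hx).2]⟩
  have hpos : ∀ b, (0 : ℝ) < #{x ∈ S | x j = b} := fun b => by exact_mod_cast (hne b).card_pos
  have hcard := card_filter_add_card_filter_not (s := S) (fun x => x j = false)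
  simp only [Bool.not_eq_false] at hcard
  set S₀ := {x ∈ S | x j = false}
  set S₁ := {x ∈ S | x j = true}
  calc (∑ i, #(edgesBetween S S i) : ℝ)
      ≤ ∑ i, (#(edgesBetween S₀ S₀ i) : ℝ) + ∑ i, (#(edgesBetween S₁ S₁ i) : ℝ)
        + 2 * min (#S₀ : ℝ) #S₁ := by exact_mod_cast sum_card_edgesBetween_self_le_of_split j
    _ ≤ 2 * #S₀ * logb 2 #S₀ + 2 * #S₁ * logb 2 #S₁ + 2 * min (#S₀ : ℝ) #S₁ := by
        linarith [ih _ (hsub false), ih _ (hsub true)]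
    _ ≤ 2 * (#S₀ + #S₁ : ℝ) * logb 2 (#S₀ + #S₁ : ℝ) := by
        linarith [mul_logb_add_mul_logb_add_min_le (hpos false) (hpos true)]
    _ = 2 * #S * logb 2 #S := by rw [← hcard, Nat.cast_add]

/-- If `|I| > 100·log₂ N` then at least half the coordinates `i ∈ I` satisfy
`|F_i| ≤ N/20`, where `F_i` is the set of points `x` with
`f(x) = f(x ⊕ e_i) = 1`. -/
theorem half_coordinates_few_monochromatic (n : ℕ) (f : (Fin n → Bool) → Bool)
    (hN : 1 ≤ (satSet n f).card) (I : Finset (Fin n))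
    (hI : 100 * Real.logb 2 ((satSet n f).card : ℝ) < (I.card : ℝ)) :
    (I.card : ℝ) / 2 ≤
      ((I.filter (fun i =>
          ((Finset.univ.filter (fun x : Fin n → Bool =>
              f x = true ∧ f (flipBit n x i) = true)).card : ℝ)
            ≤ ((satSet n f).card : ℝ) / 20)).card : ℝ) := by
  set N : ℝ := Nat.cast #(satSet n f)
  have hF : ∀ i, univ.filter (fun x => f x = true ∧ f (flipBit n x i) = true)
      = edgesBetween (satSet n f) (satSet n f) i := fun i => by
    ext x
    simp [edgesBetween, satSet]
  simp only [hF]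
  set good := fun i => (#(edgesBetween (satSet n f) (satSet n f) i) : ℝ) ≤ N / 20
  have hmarkov : #{i ∈ I | ¬ good i} * (N / 20) ≤ 2 * N * logb 2 N :=
    calc #{i ∈ I | ¬ good i} * (N / 20)
        ≤ ∑ i ∈ I with ¬ good i, (#(edgesBetween (satSet n f) (satSet n f) i) : ℝ) := by
          rw [← nsmul_eq_mul]
          exact card_nsmul_le_sum _ _ _ fun i hi => (not_le.mp (mem_filter.mp hi).2).le
      _ ≤ ∑ i, (#(edgesBetween (satSet n f) (satSet n f) i) : ℝ) :=
          sum_le_sum_of_subset_of_nonneg (subset_univ _) fun _ _ _ => by positivity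
      _ ≤ 2 * N * logb 2 N := sum_card_edgesBetween_self_le _
  have hNpos : (0 : ℝ) < N / 20 := div_pos (Nat.cast_pos.mpr hN) (by norm_num)
  have hbad : (#{i ∈ I | ¬ good i} : ℝ) ≤ 40 * logb 2 N :=
    le_of_mul_le_mul_right (by linarith) hNpos
  have hcard : (#{i ∈ I | good i} : ℝ) + #{i ∈ I | ¬ good i} = #I := by
    exact_mod_cast card_filter_add_card_filter_not good
  linarith
end

section
/- Let f: {0,1}^n → {0,1} with N := |f^{-1}(1)| ≥ 1, and let a, z ∈ {0,1}^n satisfy Δ(a, z) > 2N. Then the number of coordinates i ∈ a Δ z (coordinates where a and z differ) such that f(a ⊕ e_i) = 0 and f(z ⊕ e_i) = 0 is at least Δ(a, z)/2; in particular, for a uniform random i ∼ a Δ z, Pr[f(a^{(i)}) = f(z^{(i)}) = 0] ≥ 1/2. -/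
open Finset

/-! Every `i ∈ a Δ z` is a double zero unless `f(a ⊕ eᵢ) = 1` or `f(z ⊕ eᵢ) = 1`. The maps
`i ↦ a ⊕ eᵢ` and `j ↦ z ⊕ eⱼ` are injective, and their images are disjoint once `Δ(a, z) > 2`,
since `a ⊕ eᵢ = z ⊕ eⱼ` forces `Δ(a, z) ≤ 2`. So at most `N` coordinates fail, leaving at least
`Δ(a, z) - N > Δ(a, z) / 2` double zeros. -/

theorem hammingDist_flipBit {n : ℕ} (x : Fin n → Bool) (i : Fin n) :
    hammingDist x (flipBit n x i) = 1 := by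
  rw [hammingDist, Finset.card_eq_one]
  refine ⟨i, Finset.ext fun j => ?_⟩
  rw [Finset.mem_filter, Finset.mem_singleton]
  by_cases hji : j = i <;> simp [flipBit, hji]

theorem flipBit_injective {n : ℕ} (x : Fin n → Bool) : Function.Injective (flipBit n x) := by
  intro i j hij
  by_contra hne
  have hi : flipBit n x i i = !x i := by simp [flipBit]
  rw [hij, flipBit, Function.update_of_ne hne] at hi
  exact Bool.not_ne_self (x i) hi.symm

theorem flipBit_ne_flipBit_of_two_lt_hammingDist {n : ℕ} {a z : Fin n → Bool}
    (h : 2 < hammingDist a z) (i j : Fin n) : flipBit n a i ≠ flipBit n z j := by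
  intro hij
  have := hammingDist_triangle a (flipBit n a i) z
  rw [hammingDist_flipBit, hij, hammingDist_comm (flipBit n z j), hammingDist_flipBit] at this
  omega

def flipSat (n : ℕ) (f : (Fin n → Bool) → Bool) (x : Fin n → Bool) : Finset (Fin n) :=
  Finset.univ.filter (fun i => f (flipBit n x i) = true)

def doubleZeros (n : ℕ) (f : (Fin n → Bool) → Bool) (a z : Fin n → Bool) : Finset (Fin n) :=
  Finset.univ.filter (fun i => a i ≠ z i ∧ f (flipBit n a i) = false ∧ f (flipBit n z i) = false)

theorem card_flipSat_add_card_flipSat_le {n : ℕ} (f : (Fin n → Bool) → Bool)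
    {a z : Fin n → Bool} (h : 2 < hammingDist a z) :
    (flipSat n f a).card + (flipSat n f z).card ≤ (satSet n f).card := by
  have hdisj : Disjoint ((flipSat n f a).image (flipBit n a))
      ((flipSat n f z).image (flipBit n z)) :=
    Finset.disjoint_left.2 fun _ hx hx' => by
      obtain ⟨i, -, rfl⟩ := Finset.mem_image.1 hx
      obtain ⟨j, -, hj⟩ := Finset.mem_image.1 hx'
      exact flipBit_ne_flipBit_of_two_lt_hammingDist h i j hj.symm
  have hsub : (flipSat n f a).image (flipBit n a) ∪ (flipSat n f z).image (flipBit n z) ⊆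
      satSet n f := by
    simp [Finset.union_subset_iff, Finset.image_subset_iff, flipSat, satSet]
  calc (flipSat n f a).card + (flipSat n f z).card
      = ((flipSat n f a).image (flipBit n a) ∪ (flipSat n f z).image (flipBit n z)).card := by
        rw [Finset.card_union_of_disjoint hdisj,
          Finset.card_image_of_injective _ (flipBit_injective a),
          Finset.card_image_of_injective _ (flipBit_injective z)]
    _ ≤ (satSet n f).card := Finset.card_le_card hsub

theorem hammingDist_le_card_doubleZeros_add_card_flipSat_add_card_flipSat {n : ℕ}
    (f : (Fin n → Bool) → Bool) (a z : Fin n → Bool) :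
    hammingDist a z ≤
      (doubleZeros n f a z).card + (flipSat n f a).card + (flipSat n f z).card := by
  have hcover : Finset.univ.filter (fun i => a i ≠ z i) ⊆
      doubleZeros n f a z ∪ flipSat n f a ∪ flipSat n f z := by
    intro i hi
    rw [Finset.mem_filter] at hi
    simp only [doubleZeros, flipSat, Finset.mem_union, Finset.mem_filter, Finset.mem_univ,
      true_and]
    cases f (flipBit n a i) <;> cases f (flipBit n z i) <;> simp [hi.2]
  calc hammingDist a z ≤ (doubleZeros n f a z ∪ flipSat n f a ∪ flipSat n f z).card :=
        Finset.card_le_card hcover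
    _ ≤ (doubleZeros n f a z ∪ flipSat n f a).card + (flipSat n f z).card :=
        Finset.card_union_le _ _
    _ ≤ _ := Nat.add_le_add_right (Finset.card_union_le _ _) _

theorem hammingDist_le_card_doubleZeros_add_card_satSet {n : ℕ} (f : (Fin n → Bool) → Bool)
    {a z : Fin n → Bool} (h : 2 < hammingDist a z) :
    hammingDist a z ≤ (doubleZeros n f a z).card + (satSet n f).card := by
  have := hammingDist_le_card_doubleZeros_add_card_flipSat_add_card_flipSat f a z
  have := card_flipSat_add_card_flipSat_le f h
  omega

/-- If `Δ(a,z) > 2N`, then for at least half of the coordinates `i` where `a`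
and `z` differ, both `f(a^{(i)}) = 0` and `f(z^{(i)}) = 0`. -/
theorem checkSamples_many_double_zeros (n : ℕ) (f : (Fin n → Bool) → Bool)
    (hN : 1 ≤ (satSet n f).card) (a z : Fin n → Bool)
    (hfar : 2 * ((satSet n f).card : ℝ) < (hammingDist a z : ℝ)) :
    (hammingDist a z : ℝ) / 2 ≤
      ((Finset.univ.filter (fun i : Fin n =>
          a i ≠ z i ∧ f (flipBit n a i) = false ∧ f (flipBit n z i) = false)).card : ℝ) := by
  have hfar' : 2 * (satSet n f).card < hammingDist a z := by exact_mod_cast hfar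
  have hcover : (hammingDist a z : ℝ) ≤ (doubleZeros n f a z).card + (satSet n f).card := by
    exact_mod_cast hammingDist_le_card_doubleZeros_add_card_satSet f (by omega)
  change _ ≤ ((doubleZeros n f a z).card : ℝ)
  linarith
end
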